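/- Under the single-asset stale return setup (mutually independent Bernoulli staleness indicators B(1),...,B(n) with constant probability p in [0,1), efficient returns with E[delta(l)*delta(l')] = c*1{l=l'} and independent of the indicators, stale returns tdelta(j) = Sum_{l=1}^{j} alpha(j,j-l)*delta(l)), the average squared stale return is asymptotically unbiased for c, with the finite-sample bound: | (1/n) * Sum_{j=1}^{n} E[tdelta(j)^2] - c | <= |c| * p / (n * (1 - p)). -/

import Mathlib

open MeasureTheory ProbabilityTheory

lemma prod01 {ι : Type*} (s : Finset ι) (f : ι → ℝ)
    (h : ∀ i ∈ s, f i = 0 ∨ f i = 1) : (∏ i ∈ s, f i) = 0 ∨ (∏ i ∈ s, f i) = 1 := by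
  classical
  induction s using Finset.induction with
  | empty => simp
  | @insert a s hi ih =>
    rw [Finset.prod_insert hi]
    rcases h a (Finset.mem_insert_self a s) with h0 | h1
    · left; simp [h0]
    · rcases ih (fun i hi => h i (Finset.mem_insert_of_mem hi)) with h0 | h1'
      · left; simp [h0]
      · right; simp [h1, h1']

lemma integrable01 {Ω : Type*} [MeasurableSpace Ω] {μ : Measure Ω} [IsProbabilityMeasure μ]
    {f : Ω → ℝ} (hm : Measurable f) (h : ∀ ω, f ω = 0 ∨ f ω = 1) : Integrable f μ := by
  refine (integrable_const (1:ℝ)).mono' hm.aestronglyMeasurable (ae_of_all _ fun ω => ?_)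
  rcases h ω with hf | hf <;> simp [hf]

lemma integral_prod01 {Ω ι : Type*} [MeasurableSpace Ω] (μ : Measure Ω) [IsProbabilityMeasure μ]
    (g : ι → Ω → ℝ) (hind : iIndepFun g μ)
    (hmeas : ∀ i, Measurable (g i)) (h01 : ∀ i ω, g i ω = 0 ∨ g i ω = 1) (s : Finset ι) :
    ∫ ω, ∏ i ∈ s, g i ω ∂μ = ∏ i ∈ s, ∫ ω, g i ω ∂μ := by
  classical
  induction s using Finset.induction with
  | empty => simp
  | @insert a s hi ih =>
    have hPmeas : Measurable (fun ω => ∏ i ∈ s, g i ω) :=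
      Finset.measurable_prod s (fun i _ => hmeas i)
    have hP01 : ∀ ω, (∏ i ∈ s, g i ω) = 0 ∨ (∏ i ∈ s, g i ω) = 1 := fun ω =>
      prod01 s (fun i => g i ω) (fun i _ => h01 i ω)
    have hIF : IndepFun (fun ω => g a ω) (fun ω => ∏ i ∈ s, g i ω) μ := by
      have := (hind.indepFun_finset_prod_of_notMem hmeas hi).symm
      have he : (∏ i ∈ s, g i) = fun ω => ∏ i ∈ s, g i ω := by
        funext ω; exact Finset.prod_apply ω s g
      rwa [he] at this
    have key := hIF.integral_mul_eq_mul_integral (integrable01 (hmeas a) (h01 a)).aestronglyMeasurable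
      (integrable01 hPmeas hP01).aestronglyMeasurable
    have he2 : ((fun ω => g a ω) * fun ω => ∏ i ∈ s, g i ω) =
        fun ω => ∏ i ∈ insert a s, g i ω := by
      funext ω; simp [Finset.prod_insert hi]
    rw [he2] at key
    rw [key, ih, Finset.prod_insert hi]

/-- Asymptotic unbiasedness of averaged squared stale returns: under the single-asset stale
return setup, the average of `E[tδ(j)²]` over `j = 1, ..., n` is within
`|c| p / (n (1 - p))` of the efficient variance `c`. -/
theorem stale_return_variance_bias_bound
    {Ω : Type*} [MeasurableSpace Ω] (μ : Measure Ω) [IsProbabilityMeasure μ]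
    (n : ℕ) (hn : 1 ≤ n) (p : ℝ) (hp : p ∈ Set.Ico (0:ℝ) 1) (c : ℝ)
    (B δ : ℕ → Ω → ℝ)
    (hBmeas : ∀ k, Measurable (B k))
    (hB01 : ∀ k ω, B k ω = 0 ∨ B k ω = 1)
    (hP : ∀ k, 1 ≤ k → k ≤ n → μ {ω | B k ω = 1} = ENNReal.ofReal p)
    (hind : iIndepFun
      (fun k : {k : ℕ // k ∈ Finset.Icc 1 n} => B k.1) μ)
    (hδmeas : ∀ l, Measurable (δ l))
    (hδ2 : ∀ l, 1 ≤ l → l ≤ n → MemLp (δ l) 2 μ)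
    (hδB : Indep
      (⨆ l ∈ Finset.Icc 1 n, MeasurableSpace.comap (δ l) inferInstance)
      (⨆ k ∈ Finset.Icc 1 n, MeasurableSpace.comap (B k) inferInstance) μ)
    (hmom : ∀ l l', 1 ≤ l → l ≤ n → 1 ≤ l' → l' ≤ n →
      ∫ ω, δ l ω * δ l' ω ∂μ = if l = l' then c else 0) :
    |(1 / (n : ℝ)) *
        (∑ j ∈ Finset.Icc 1 n,
          ∫ ω,
            (∑ l ∈ Finset.Icc 1 j,
              ((1 - B j ω) * ∏ k ∈ Finset.Icc 1 (j - l), B (j - k) ω) * δ l ω) ^ 2 ∂μ)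
      - c| ≤ |c| * p / (n * (1 - p)) := by
  classical
  obtain ⟨hp0, hp1⟩ := hp
  set a : ℕ → ℕ → Ω → ℝ :=
    fun j l ω => (1 - B j ω) * ∏ k ∈ Finset.Icc 1 (j - l), B (j - k) ω with ha
  -- basic facts about a
  have ha01 : ∀ j l ω, a j l ω = 0 ∨ a j l ω = 1 := by
    intro j l ω
    rcases hB01 j ω with h0 | h1
    · rcases prod01 (Finset.Icc 1 (j - l)) (fun k => B (j - k) ω)
        (fun k _ => hB01 (j - k) ω) with hq | hq
      · left; simp only [ha]; rw [hq, mul_zero]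
      · right; simp only [ha]; rw [hq, h0]; ring
    · left; simp only [ha]; rw [h1]; ring
  have hameas : ∀ j l, Measurable (a j l) := by
    intro j l
    exact ((measurable_const.sub (hBmeas j)).mul
      (Finset.measurable_prod _ (fun k _ => hBmeas (j - k))))
  -- key computation: ∫ a j l = (1-p) * p^(j-l)
  have hIa : ∀ j l, 1 ≤ l → l ≤ j → j ≤ n →
      ∫ ω, a j l ω ∂μ = (1 - p) * p ^ (j - l) := by
    intro j l hl hlj hjn
    set g : ℕ → Ω → ℝ := fun i ω => if i = j then 1 - B j ω else B i ω with hg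
    -- pointwise identity
    have hpt : ∀ ω, a j l ω = ∏ i ∈ Finset.Icc l j, g i ω := by
      intro ω
      have hIcc : Finset.Icc l j = insert j (Finset.Icc l (j - 1)) := by
        ext i; simp only [Finset.mem_Icc, Finset.mem_insert]; omega
      have hnotmem : j ∉ Finset.Icc l (j - 1) := by
        simp only [Finset.mem_Icc]; omega
      rw [hIcc, Finset.prod_insert hnotmem]
      have h1 : g j ω = 1 - B j ω := by simp [hg]
      have h2 : ∏ i ∈ Finset.Icc l (j - 1), g i ω = ∏ i ∈ Finset.Icc l (j - 1), B i ω := by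
        refine Finset.prod_congr rfl fun i hi => ?_
        simp only [Finset.mem_Icc] at hi
        have : i ≠ j := by omega
        simp [hg, this]
      have h3 : ∏ k ∈ Finset.Icc 1 (j - l), B (j - k) ω
          = ∏ i ∈ Finset.Icc l (j - 1), B i ω := by
        refine Finset.prod_nbij' (fun k => j - k) (fun i => j - i) ?_ ?_ ?_ ?_ ?_
        · intro k hk; simp only [Finset.mem_Icc] at *; omega
        · intro i hi; simp only [Finset.mem_Icc] at *; omega
        · intro k hk; simp only [Finset.mem_Icc] at hk; show j - (j - k) = k; omega
        · intro i hi; simp only [Finset.mem_Icc] at hi; show j - (j - i) = i; omega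
        · intro k hk; rfl
      rw [h1, h2, ← h3]
    -- independence of the g family (restricted to the subtype)
    have hGind : iIndepFun
        (fun x : {k : ℕ // k ∈ Finset.Icc 1 n} => g x.1) μ := by
      set φ : {k : ℕ // k ∈ Finset.Icc 1 n} → ℝ → ℝ :=
        fun x r => if x.1 = j then 1 - r else r with hφ
      have hφm : ∀ x, Measurable (φ x) := by
        intro x
        by_cases hx : x.1 = j
        · simp only [hφ, hx, if_true]
          exact measurable_const.sub measurable_id
        · simp only [hφ, hx, if_false]
          exact measurable_id
      have := hind.comp φ hφm
      convert this using 1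
      funext x ω
      by_cases hx : x.1 = j <;> simp [hg, hφ, hx, Function.comp]
    have hGmeas : ∀ x : {k : ℕ // k ∈ Finset.Icc 1 n}, Measurable (g x.1) := by
      intro x
      by_cases hx : x.1 = j <;> simp only [hg, hx, if_true, if_false]
      · exact measurable_const.sub (hBmeas j)
      · exact hBmeas x.1
    have hG01 : ∀ (x : {k : ℕ // k ∈ Finset.Icc 1 n}) ω, g x.1 ω = 0 ∨ g x.1 ω = 1 := by
      intro x ω
      by_cases hx : x.1 = j <;> simp only [hg, hx, if_true, if_false]
      · rcases hB01 j ω with h0 | h1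
        · right; simp [h0]
        · left; simp [h1]
      · exact hB01 x.1 ω
    have hsub : ∀ i ∈ Finset.Icc l j, i ∈ Finset.Icc 1 n := by
      intro i hi; simp only [Finset.mem_Icc] at *; omega
    set t : Finset {k : ℕ // k ∈ Finset.Icc 1 n} :=
      (Finset.Icc l j).subtype (· ∈ Finset.Icc 1 n) with ht
    have hIP := integral_prod01 μ _ hGind hGmeas hG01 t
    -- ∫ B i = p for i in range
    have hIB : ∀ i, 1 ≤ i → i ≤ n → ∫ ω, B i ω ∂μ = p := by
      intro i h1 h2
      have hset : MeasurableSet {ω | B i ω = 1} := by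
        have : {ω | B i ω = 1} = B i ⁻¹' {1} := rfl
        rw [this]; exact (hBmeas i) (measurableSet_singleton 1)
      have heq : (fun ω => B i ω) = Set.indicator {ω | B i ω = 1} (fun _ => (1:ℝ)) := by
        funext ω
        rcases hB01 i ω with h0 | h1'
        · rw [h0, Set.indicator_of_notMem]; simp [Set.mem_setOf_eq, h0]
        · rw [h1', Set.indicator_of_mem]; exact h1'
      rw [heq, integral_indicator_const _ hset, measureReal_def, hP i h1 h2, smul_eq_mul, mul_one,
        ENNReal.toReal_ofReal hp0]
    have hIg : ∀ i ∈ Finset.Icc l j, ∫ ω, g i ω ∂μ = if i = j then 1 - p else p := by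
      intro i hi
      simp only [Finset.mem_Icc] at hi
      by_cases hx : i = j <;> simp only [hg, hx, if_true, if_false]
      · rw [integral_sub (integrable_const 1) (integrable01 (hBmeas j) (hB01 j)),
          integral_const, probReal_univ, smul_eq_mul, mul_one,
          hIB j (by omega) hjn]
      · exact hIB i (by omega) (by omega)
    -- put it together
    calc ∫ ω, a j l ω ∂μ = ∫ ω, ∏ i ∈ Finset.Icc l j, g i ω ∂μ := by
          exact integral_congr_ae (ae_of_all _ fun ω => hpt ω)
      _ = ∫ ω, ∏ x ∈ t, g x.1 ω ∂μ := by
          congr 1; funext ω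
          exact (Finset.prod_subtype_of_mem (fun i => g i ω) hsub).symm
      _ = ∏ x ∈ t, ∫ ω, g x.1 ω ∂μ := hIP
      _ = ∏ i ∈ Finset.Icc l j, ∫ ω, g i ω ∂μ :=
          Finset.prod_subtype_of_mem (fun i => ∫ ω, g i ω ∂μ) hsub
      _ = (1 - p) * p ^ (j - l) := by
          rw [Finset.prod_congr rfl hIg]
          have hIcc : Finset.Icc l j = insert j (Finset.Icc l (j - 1)) := by
            ext i; simp only [Finset.mem_Icc, Finset.mem_insert]; omega
          have hnotmem : j ∉ Finset.Icc l (j - 1) := by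
            simp only [Finset.mem_Icc]; omega
          rw [hIcc, Finset.prod_insert hnotmem, if_pos rfl]
          congr 1
          have : ∏ i ∈ Finset.Icc l (j - 1), (if i = j then 1 - p else p)
              = ∏ i ∈ Finset.Icc l (j - 1), p := by
            refine Finset.prod_congr rfl fun i hi => ?_
            simp only [Finset.mem_Icc] at hi
            have : i ≠ j := by omega
            simp [this]
          rw [this, Finset.prod_const, Nat.card_Icc]
          congr 1
          omega
  -- measurability wrt the two sub-σ-algebras
  have hδmδ : ∀ l, 1 ≤ l → l ≤ n →
      Measurable[⨆ l ∈ Finset.Icc 1 n, MeasurableSpace.comap (δ l) inferInstance] (δ l) := by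
    intro l h1 h2
    have hmem : l ∈ Finset.Icc 1 n := by simp only [Finset.mem_Icc]; omega
    exact measurable_iff_comap_le.mpr
      (le_biSup (fun l => MeasurableSpace.comap (δ l) inferInstance) hmem)
  have hBmB : ∀ k, 1 ≤ k → k ≤ n →
      Measurable[⨆ k ∈ Finset.Icc 1 n, MeasurableSpace.comap (B k) inferInstance] (B k) := by
    intro k h1 h2
    have hmem : k ∈ Finset.Icc 1 n := by simp only [Finset.mem_Icc]; omega
    exact measurable_iff_comap_le.mpr
      (le_biSup (fun k => MeasurableSpace.comap (B k) inferInstance) hmem)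
  have hamB : ∀ j l, 1 ≤ l → l ≤ j → j ≤ n →
      Measurable[⨆ k ∈ Finset.Icc 1 n, MeasurableSpace.comap (B k) inferInstance] (a j l) := by
    intro j l h1 h2 h3
    refine Measurable.mul (Measurable.sub measurable_const (hBmB j (by omega) h3)) ?_
    refine Finset.measurable_prod _ fun k hk => ?_
    simp only [Finset.mem_Icc] at hk
    exact hBmB (j - k) (by omega) (by omega)
  -- factorization of the integral via independence
  have hfact : ∀ j l l', 1 ≤ l → l ≤ j → 1 ≤ l' → l' ≤ j → j ≤ n →
      ∫ ω, (δ l ω * δ l' ω) * (a j l ω * a j l' ω) ∂μ =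
        (∫ ω, δ l ω * δ l' ω ∂μ) * ∫ ω, a j l ω * a j l' ω ∂μ := by
    intro j l l' hl1 hl2 hl1' hl2' hjn
    have h1 : IndepFun (fun ω => δ l ω * δ l' ω) (fun ω => a j l ω * a j l' ω) μ := by
      refine indep_of_indep_of_le_right (indep_of_indep_of_le_left hδB ?_) ?_
      · exact measurable_iff_comap_le.mp
          (Measurable.mul (hδmδ l hl1 (by omega)) (hδmδ l' hl1' (by omega)))
      · exact measurable_iff_comap_le.mp
          (Measurable.mul (hamB j l hl1 hl2 hjn) (hamB j l' hl1' hl2' hjn))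
    exact h1.integral_mul_eq_mul_integral (((hδmeas l).mul (hδmeas l')).aestronglyMeasurable)
      (((hameas j l).mul (hameas j l')).aestronglyMeasurable)
  -- per-j computation
  have hEj : ∀ j, 1 ≤ j → j ≤ n →
      ∫ ω, (∑ l ∈ Finset.Icc 1 j, a j l ω * δ l ω) ^ 2 ∂μ = c * (1 - p ^ j) := by
    intro j hj1 hjn
    have hsq : ∀ ω, (∑ l ∈ Finset.Icc 1 j, a j l ω * δ l ω) ^ 2
        = ∑ l ∈ Finset.Icc 1 j, ∑ l' ∈ Finset.Icc 1 j,
            (δ l ω * δ l' ω) * (a j l ω * a j l' ω) := by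
      intro ω
      rw [sq, Finset.sum_mul_sum]
      exact Finset.sum_congr rfl fun l _ => Finset.sum_congr rfl fun l' _ => by ring
    have hint : ∀ l l', l ∈ Finset.Icc 1 j → l' ∈ Finset.Icc 1 j →
        Integrable (fun ω => (δ l ω * δ l' ω) * (a j l ω * a j l' ω)) μ := by
      intro l l' hl hl'
      simp only [Finset.mem_Icc] at hl hl'
      have hδδ : Integrable (fun ω => δ l ω * δ l' ω) μ := by
        have hh : MemLp (δ l • δ l') 1 μ :=
          (hδ2 l' hl'.1 (le_trans hl'.2 hjn)).smul (hδ2 l hl.1 (le_trans hl.2 hjn))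
        exact memLp_one_iff_integrable.mp hh
      have hI := hδδ.bdd_mul
        ((hameas j l).mul (hameas j l')).aestronglyMeasurable
        (c := 1) (ae_of_all _ fun ω => by
          rcases ha01 j l ω with h | h <;> rcases ha01 j l' ω with h' | h' <;>
            simp [h, h'])
      exact hI.congr (ae_of_all _ fun ω => by simp only [Pi.mul_apply]; ring)
    calc ∫ ω, (∑ l ∈ Finset.Icc 1 j, a j l ω * δ l ω) ^ 2 ∂μ
        = ∫ ω, ∑ l ∈ Finset.Icc 1 j, ∑ l' ∈ Finset.Icc 1 j,
            (δ l ω * δ l' ω) * (a j l ω * a j l' ω) ∂μ :=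
          integral_congr_ae (ae_of_all _ hsq)
      _ = ∑ l ∈ Finset.Icc 1 j, ∑ l' ∈ Finset.Icc 1 j,
            ∫ ω, (δ l ω * δ l' ω) * (a j l ω * a j l' ω) ∂μ := by
          rw [integral_finset_sum _ (fun l hl =>
            integrable_finset_sum _ (fun l' hl' => hint l l' hl hl'))]
          exact Finset.sum_congr rfl fun l hl =>
            integral_finset_sum _ (fun l' hl' => hint l l' hl hl')
      _ = ∑ l ∈ Finset.Icc 1 j, ∑ l' ∈ Finset.Icc 1 j,
            (if l = l' then c else 0) * ∫ ω, a j l ω * a j l' ω ∂μ := by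
          refine Finset.sum_congr rfl fun l hl => Finset.sum_congr rfl fun l' hl' => ?_
          simp only [Finset.mem_Icc] at hl hl'
          rw [hfact j l l' hl.1 hl.2 hl'.1 hl'.2 hjn,
            hmom l l' hl.1 (le_trans hl.2 hjn) hl'.1 (le_trans hl'.2 hjn)]
      _ = ∑ l ∈ Finset.Icc 1 j, c * ∫ ω, a j l ω * a j l ω ∂μ := by
          refine Finset.sum_congr rfl fun l hl => ?_
          rw [Finset.sum_eq_single l]
          · rw [if_pos rfl]
          · intro l' _ hne
            rw [if_neg (fun h => hne h.symm), zero_mul]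
          · intro h; exact absurd hl h
      _ = ∑ l ∈ Finset.Icc 1 j, c * ((1 - p) * p ^ (j - l)) := by
          refine Finset.sum_congr rfl fun l hl => ?_
          simp only [Finset.mem_Icc] at hl
          congr 1
          have : ∀ ω, a j l ω * a j l ω = a j l ω := by
            intro ω; rcases ha01 j l ω with h | h <;> simp [h]
          rw [integral_congr_ae (ae_of_all _ this), hIa j l hl.1 hl.2 hjn]
      _ = c * (1 - p ^ j) := by
          rw [← Finset.mul_sum]
          congr 1
          have hre : ∑ l ∈ Finset.Icc 1 j, (1 - p) * p ^ (j - l)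
              = ∑ m ∈ Finset.range j, (1 - p) * p ^ m := by
            refine Finset.sum_nbij' (fun l => j - l) (fun m => j - m) ?_ ?_ ?_ ?_ ?_
            · intro l hl; simp only [Finset.mem_Icc, Finset.mem_range] at *; omega
            · intro m hm; simp only [Finset.mem_Icc, Finset.mem_range] at *; omega
            · intro l hl; simp only [Finset.mem_Icc] at hl; show j - (j - l) = l; omega
            · intro m hm; simp only [Finset.mem_range] at hm; show j - (j - m) = m; omega
            · intro l hl; rfl
          rw [hre, ← Finset.mul_sum, mul_neg_geom_sum]
  -- rewrite the target sum
  have hmain : ∑ j ∈ Finset.Icc 1 n,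
      (∫ ω, (∑ l ∈ Finset.Icc 1 j,
        ((1 - B j ω) * ∏ k ∈ Finset.Icc 1 (j - l), B (j - k) ω) * δ l ω) ^ 2 ∂μ)
      = ∑ j ∈ Finset.Icc 1 n, c * (1 - p ^ j) := by
    refine Finset.sum_congr rfl fun j hj => ?_
    simp only [Finset.mem_Icc] at hj
    exact hEj j hj.1 hj.2
  rw [hmain]
  -- final arithmetic
  set S : ℝ := ∑ j ∈ Finset.Icc 1 n, p ^ j with hS
  have hS0 : 0 ≤ S := Finset.sum_nonneg fun j _ => pow_nonneg hp0 j
  have hn0 : (0:ℝ) < n := by exact_mod_cast Nat.pos_of_ne_zero (by omega)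
  have h1p : (0:ℝ) < 1 - p := by linarith
  have hsum : ∑ j ∈ Finset.Icc 1 n, c * (1 - p ^ j) = c * ((n : ℝ) - S) := by
    rw [← Finset.mul_sum]
    congr 1
    rw [Finset.sum_sub_distrib, Finset.sum_const, Nat.card_Icc]
    simp [hS]
  rw [hsum]
  have habs : (1 / (n : ℝ)) * (c * ((n : ℝ) - S)) - c = -(c * S / n) := by
    field_simp
    ring
  rw [habs, abs_neg, abs_div, abs_mul, abs_of_nonneg hS0,
    abs_of_nonneg hn0.le]
  -- bound S ≤ p / (1 - p)
  have hSle : S ≤ p / (1 - p) := by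
    have hT : ∑ m ∈ Finset.range n, p ^ m ≤ 1 / (1 - p) := by
      rw [le_div_iff₀ h1p, mul_comm, mul_neg_geom_sum]
      have : 0 ≤ p ^ n := pow_nonneg hp0 n
      linarith
    have hSpT : S = p * ∑ m ∈ Finset.range n, p ^ m := by
      rw [hS, Finset.mul_sum]
      refine Finset.sum_nbij' (fun j => j - 1) (fun m => m + 1) ?_ ?_ ?_ ?_ ?_
      · intro j hj; simp only [Finset.mem_Icc] at hj
        show j - 1 ∈ Finset.range n
        simp only [Finset.mem_range]; omega
      · intro m hm; simp only [Finset.mem_range] at hm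
        show m + 1 ∈ Finset.Icc 1 n
        simp only [Finset.mem_Icc]; omega
      · intro j hj; simp only [Finset.mem_Icc] at hj; show j - 1 + 1 = j; omega
      · intro m hm; show m + 1 - 1 = m; omega
      · intro j hj
        simp only [Finset.mem_Icc] at hj
        show p ^ j = p * p ^ (j - 1)
        rw [← pow_succ']
        congr 1
        omega
    rw [hSpT]
    calc p * ∑ m ∈ Finset.range n, p ^ m ≤ p * (1 / (1 - p)) := by
          exact mul_le_mul_of_nonneg_left hT hp0
      _ = p / (1 - p) := by field_simp
  have hrhs : |c| * p / ((n : ℝ) * (1 - p)) = |c| * (p / (1 - p)) / n := by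
    rw [mul_div_assoc, mul_div_assoc, div_div, mul_comm ((1:ℝ) - p) (n : ℝ)]
  rw [hrhs]
  have hmul := mul_le_mul_of_nonneg_left hSle (abs_nonneg c)
  gcongr
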